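/- If the block matrix H = [[A, X],[X*, B]] is positive semidefinite, then X can be written as X = A^{1/2} K B^{1/2} for some contraction K (i.e., a matrix K with operator norm at most 1). -/

import Mathlib

open Matrix
open scoped ComplexOrder

noncomputable def mrpow {n : ℕ} (A : Matrix (Fin n) (Fin n) ℂ) (t : ℝ) :
    Matrix (Fin n) (Fin n) ℂ :=
  if h : A.IsHermitian then
    (h.eigenvectorUnitary : Matrix (Fin n) (Fin n) ℂ) *
      Matrix.diagonal (fun i => ((h.eigenvalues i ^ t : ℝ) : ℂ)) *
      star (h.eigenvectorUnitary : Matrix (Fin n) (Fin n) ℂ)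
  else 0

/-- Weighted geometric mean `A #_t B = A^{1/2} (A^{-1/2} B A^{-1/2})^t A^{1/2}`. -/
noncomputable def gmean {n : ℕ} (t : ℝ) (A B : Matrix (Fin n) (Fin n) ℂ) :
    Matrix (Fin n) (Fin n) ℂ :=
  mrpow A (1/2) * mrpow (mrpow A (-(1/2)) * B * mrpow A (-(1/2))) t * mrpow A (1/2)

/-- `|X| = (XᴴX)^{1/2}`. -/
noncomputable def matAbs {n : ℕ} (X : Matrix (Fin n) (Fin n) ℂ) : Matrix (Fin n) (Fin n) ℂ :=
  mrpow (Xᴴ * X) (1/2)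

/-- the `j`-th largest singular value of `X` (0-indexed: `sVal X 0` is the largest). -/
noncomputable def sVal {n : ℕ} (X : Matrix (Fin n) (Fin n) ℂ) (j : Fin n) : ℝ :=
  Real.sqrt (((Matrix.isHermitian_conjTranspose_mul_self X).eigenvalues ∘
    Tuple.sort (Matrix.isHermitian_conjTranspose_mul_self X).eigenvalues) j.rev)

/-- The block `[[A, X],[Xᴴ, B]]` is PPT. -/
def IsPPT {n : ℕ} (A X B : Matrix (Fin n) (Fin n) ℂ) : Prop :=
  (Matrix.fromBlocks A X Xᴴ B).PosSemidef ∧ (Matrix.fromBlocks A Xᴴ X B).PosSemidef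

/-!
Take `K = A^{-1/2} X B^{-1/2}`, the negative powers acting as inverses on the supports
(`0 ^ t = 0` for `t ≠ 0`). Conjugating `H` by `diag(A^{-1/2}, B^{-1/2})` gives
`[[P, K], [Kᴴ, Q]] ≥ 0` with `P, Q ≤ 1` the support projections of `A` and `B`; hence
`[[1, K], [Kᴴ, Q]] ≥ 0`, and its Schur complement gives `KᴴK ≤ Q ≤ 1`. Positivity of `H` also
forces `ker A ⊆ ker Xᴴ` and `ker B ⊆ ker X`, so `P X = X = X Q`, which is
`A^{1/2} K B^{1/2} = X`.
-/

open scoped MatrixOrder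

namespace Matrix

variable {m 𝕜 : Type*} [Fintype m] [RCLike 𝕜]

omit [Fintype m] in
lemma PosSemidef.of_fromBlocks {A B X : Matrix m m 𝕜}
    (hH : (fromBlocks A X Xᴴ B).PosSemidef) : A.PosSemidef := by
  convert hH.submatrix Sum.inl
  ext; simp

omit [Fintype m] in
lemma PosSemidef.fromBlocks_swap {A B X : Matrix m m 𝕜}
    (hH : (fromBlocks A X Xᴴ B).PosSemidef) : (fromBlocks B Xᴴ Xᴴᴴ A).PosSemidef := by
  simpa [fromBlocks_submatrix_sum_swap_sum_swap] using hH.submatrix (Equiv.sumComm m m)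

lemma PosSemidef.conjTranspose_mulVec_eq_zero_of_fromBlocks {A B X : Matrix m m 𝕜}
    (hH : (fromBlocks A X Xᴴ B).PosSemidef) {v : m → 𝕜} (hv : A *ᵥ v = 0) :
    Xᴴ *ᵥ v = 0 := by
  have hzero : fromBlocks A X Xᴴ B *ᵥ Sum.elim v 0 = 0 := by
    rw [← hH.dotProduct_mulVec_zero_iff]
    simp [fromBlocks_mulVec, hv, Function.star_sumElim]
  simpa [fromBlocks_mulVec] using congrArg (· ∘ Sum.inr) hzero

variable [DecidableEq m]

lemma PosSemidef.mul_eq_self_of_fromBlocks {A B X P : Matrix m m 𝕜}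
    (hH : (fromBlocks A X Xᴴ B).PosSemidef) (hP : P.IsHermitian) (hAP : A * P = A) :
    P * X = X := by
  have hker : Xᴴ * (1 - P) = 0 := by
    refine ext_iff_mulVec.mpr fun v => ?_
    rw [← mulVec_mulVec, zero_mulVec]
    refine hH.conjTranspose_mulVec_eq_zero_of_fromBlocks ?_
    rw [mulVec_mulVec, Matrix.mul_sub, hAP, Matrix.mul_one, sub_self, zero_mulVec]
  have := congrArg (fun M => Mᴴ) hker
  rw [conjTranspose_mul, conjTranspose_sub, conjTranspose_one, hP.eq, conjTranspose_conjTranspose,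
    conjTranspose_zero, sub_mul, one_mul, sub_eq_zero] at this
  exact this.symm

lemma PosSemidef.mul_eq_self_of_fromBlocks_right {A B X Q : Matrix m m 𝕜}
    (hH : (fromBlocks A X Xᴴ B).PosSemidef) (hQ : Q.IsHermitian) (hBQ : B * Q = B) :
    X * Q = X := by
  have := congrArg (fun M => Mᴴ) (hH.fromBlocks_swap.mul_eq_self_of_fromBlocks hQ hBQ)
  simpa [hQ.eq] using this

lemma PosSemidef.fromBlocks_conj {A B X a b : Matrix m m 𝕜}
    (hH : (fromBlocks A X Xᴴ B).PosSemidef) (ha : a.IsHermitian) (hb : b.IsHermitian) :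
    (fromBlocks (a * A * a) (a * X * b) (a * X * b)ᴴ (b * B * b)).PosSemidef := by
  convert hH.conjTranspose_mul_mul_same (fromBlocks a 0 0 b) using 1
  simp [fromBlocks_conjTranspose, fromBlocks_multiply, ha.eq, hb.eq, Matrix.mul_assoc]

lemma PosSemidef.fromBlocks_zero_zero_zero {C : Matrix m m 𝕜} (hC : C.PosSemidef)
    (n : Type*) [Fintype n] : (fromBlocks C 0 0 (0 : Matrix n n 𝕜)).PosSemidef := by
  convert hC.conjTranspose_mul_mul_same (fromCols (1 : Matrix m m 𝕜) (0 : Matrix m n 𝕜)) using 1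
  simp only [conjTranspose_fromCols_eq_fromRows_conjTranspose, fromRows_mul, mul_fromCols]
  rw [fromCols_fromRows_eq_fromBlocks]
  simp

lemma conjTranspose_mul_self_le_one_of_fromBlocks {P Q K : Matrix m m 𝕜}
    (hM : (fromBlocks P K Kᴴ Q).PosSemidef) (hP : P ≤ 1) (hQ : Q ≤ 1) : Kᴴ * K ≤ 1 := by
  have h1 : (fromBlocks 1 K Kᴴ Q).PosSemidef := by
    have : fromBlocks 1 K Kᴴ Q = fromBlocks P K Kᴴ Q + fromBlocks (1 - P) 0 0 0 := by
      simp [fromBlocks_add]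
    rw [this]
    exact hM.add ((le_iff.mp hP).fromBlocks_zero_zero_zero m)
  let := invertibleOne (α := Matrix m m 𝕜)
  have h2 := (PosDef.fromBlocks₁₁ K Q PosDef.one).mp h1
  rw [inv_one, Matrix.mul_one] at h2
  exact le_trans (le_iff.mpr h2) hQ

end Matrix

lemma Real.rpow_half_mul_rpow_neg_half {x : ℝ} (hx : 0 < x) :
    x ^ (1/2 : ℝ) * x ^ (-(1/2) : ℝ) = 1 := by
  rw [← Real.rpow_add hx]; norm_num

lemma Real.rpow_neg_half_mul_self_mul_rpow_neg_half {x : ℝ} (hx : 0 < x) :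
    x ^ (-(1/2) : ℝ) * x * x ^ (-(1/2) : ℝ) = 1 := by
  conv_lhs => enter [1, 2]; rw [← Real.rpow_one x]
  rw [← Real.rpow_add hx, ← Real.rpow_add hx]; norm_num

section mrpow

variable {n : ℕ} {A : Matrix (Fin n) (Fin n) ℂ}

lemma mrpow_eq_cfc (hA : A.IsHermitian) (t : ℝ) :
    mrpow A t = cfc (fun x : ℝ => x ^ t) A := by
  rw [hA.cfc_eq, IsHermitian.cfc, mrpow, dif_pos hA]
  simp [Unitary.conjStarAlgAut_apply, Function.comp_def]

lemma isHermitian_mrpow (hA : A.IsHermitian) (t : ℝ) : (mrpow A t).IsHermitian := by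
  rw [mrpow_eq_cfc hA]
  exact cfc_predicate _ A

lemma Matrix.PosSemidef.mrpow_neg_half_mul_mul_mrpow_neg_half_le_one (hA : A.PosSemidef) :
    mrpow A (-(1/2)) * A * mrpow A (-(1/2)) ≤ 1 := by
  have hcont (f : ℝ → ℝ) : ContinuousOn f (spectrum ℝ A) := A.finite_real_spectrum.continuousOn f
  rw [mrpow_eq_cfc hA.isHermitian]
  nth_rw 2 [← cfc_id' ℝ A]
  rw [← cfc_mul _ _ _ (hcont _) (hcont _), ← cfc_mul _ _ _ (hcont _) (hcont _)]
  refine cfc_le_one _ _ fun x hx => ?_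
  rcases (spectrum_nonneg_of_nonneg (nonneg_iff_posSemidef.mpr hA) hx).eq_or_lt with h0 | hpos
  · simp [← h0]
  · exact (Real.rpow_neg_half_mul_self_mul_rpow_neg_half hpos).le

lemma mrpow_mul_mrpow_comm (hA : A.IsHermitian) (s t : ℝ) :
    mrpow A s * mrpow A t = mrpow A t * mrpow A s := by
  rw [mrpow_eq_cfc hA, mrpow_eq_cfc hA]
  exact cfc_commute_cfc _ _ A

lemma isHermitian_mrpow_mul_mrpow (hA : A.IsHermitian) (s t : ℝ) :
    (mrpow A s * mrpow A t).IsHermitian :=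
  ((isHermitian_mrpow hA s).commute_iff (isHermitian_mrpow hA t)).mp (mrpow_mul_mrpow_comm hA s t)

lemma Matrix.PosSemidef.mul_mrpow_half_mul_mrpow_neg_half (hA : A.PosSemidef) :
    A * (mrpow A (1/2) * mrpow A (-(1/2))) = A := by
  have hcont (f : ℝ → ℝ) : ContinuousOn f (spectrum ℝ A) := A.finite_real_spectrum.continuousOn f
  rw [mrpow_eq_cfc hA.isHermitian, mrpow_eq_cfc hA.isHermitian]
  nth_rw 1 [← cfc_id' ℝ A]
  rw [← cfc_mul _ _ _ (hcont _) (hcont _), ← cfc_mul _ _ _ (hcont _) (hcont _)]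
  nth_rw 2 [← cfc_id' ℝ A]
  refine cfc_congr fun x hx => ?_
  rcases (spectrum_nonneg_of_nonneg (nonneg_iff_posSemidef.mpr hA) hx).eq_or_lt with h0 | hpos
  · simp [← h0]
  · rw [Real.rpow_half_mul_rpow_neg_half hpos, mul_one]

end mrpow

lemma sVal_le_one_of_conjTranspose_mul_self_le_one {n : ℕ} {K : Matrix (Fin n) (Fin n) ℂ}
    (hK : Kᴴ * K ≤ 1) (j : Fin n) : sVal K j ≤ 1 := by
  rw [sVal, Real.sqrt_le_one]
  have hspec := (le_algebraMap_iff_spectrum_le (r := (1 : ℝ))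
    (isHermitian_conjTranspose_mul_self K).isSelfAdjoint).mp (by simpa using hK)
  exact hspec _ ((isHermitian_conjTranspose_mul_self K).eigenvalues_mem_spectrum_real _)

theorem stmt_4 {n : ℕ} (A B X : Matrix (Fin n) (Fin n) ℂ)
    (hH : (Matrix.fromBlocks A X Xᴴ B).PosSemidef) :
    ∃ K : Matrix (Fin n) (Fin n) ℂ, (∀ j, sVal K j ≤ 1) ∧
      X = mrpow A (1/2) * K * mrpow B (1/2) := by
  have hA : A.PosSemidef := hH.of_fromBlocks
  have hB : B.PosSemidef := hH.fromBlocks_swap.of_fromBlocks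
  have hPA : mrpow A (1/2) * mrpow A (-(1/2)) * X = X :=
    hH.mul_eq_self_of_fromBlocks (isHermitian_mrpow_mul_mrpow hA.isHermitian _ _)
      hA.mul_mrpow_half_mul_mrpow_neg_half
  have hPB : X * (mrpow B (-(1/2)) * mrpow B (1/2)) = X :=
    hH.mul_eq_self_of_fromBlocks_right (isHermitian_mrpow_mul_mrpow hB.isHermitian _ _)
      (by rw [mrpow_mul_mrpow_comm hB.isHermitian, hB.mul_mrpow_half_mul_mrpow_neg_half])
  refine ⟨mrpow A (-(1/2)) * X * mrpow B (-(1/2)),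
    sVal_le_one_of_conjTranspose_mul_self_le_one ?_, ?_⟩
  · exact conjTranspose_mul_self_le_one_of_fromBlocks
      (hH.fromBlocks_conj (isHermitian_mrpow hA.isHermitian _) (isHermitian_mrpow hB.isHermitian _))
      hA.mrpow_neg_half_mul_mul_mrpow_neg_half_le_one
      hB.mrpow_neg_half_mul_mul_mrpow_neg_half_le_one
  · conv_lhs => rw [← hPB, ← hPA]
    simp only [Matrix.mul_assoc]
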